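/- The set {(p, q) ∈ (0,1)² : p ≠ q and L(p, q) = 2} has two-dimensional Lebesgue measure 21/40. -/

import Mathlib

/-!
Toppling at `p` takes one grain from each neighbour `a < p < b` of `p` (the walls `0` and `1`
give none) and puts the two grains at `p` and at `a + b - p`. Starting from the empty
configuration, two rounds of `G_q ∘ G_p` therefore produce, off finitely many lines, a configuration
of three unit grains, which is minimal as soon as it contains `p` and `q` and has integral weight:
two grains at `p ≠ q` would force `p + q = 1`. For `p < 1/2` this gives `L(p, q) = 2` exactly when
`q` lies in `(0, p/2) ∪ (p/2, 3p - 1) ∪ (2p, 1/2) ∪ (1/2, 1 - p)`, a region of area `21/80`. The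
reflection `x ↦ 1 - x` conjugates `G_p` to `G_{1-p}`, so the half `p > 1/2` has the same area.
-/

open Classical MeasureTheory Function Set

/-- A configuration: a finitely supported `ℝ → ℕ` with support in `(0,1)`. -/
def IsConfig (μ : ℝ → ℕ) : Prop :=
  (Function.support μ).Finite ∧ Function.support μ ⊆ Set.Ioo (0 : ℝ) 1

/-- Total mass `Σ_h μ(h)` of a configuration. -/
noncomputable def totalMass (μ : ℝ → ℕ) : ℕ := ∑ᶠ h, μ h

/-- Weighted sum `Σ_h μ(h)·h` of a configuration. -/
noncomputable def weightedSum (μ : ℝ → ℕ) : ℝ := ∑ᶠ h, (μ h : ℝ) * h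

/-- A configuration is admissible if `Σ_h μ(h)·h` is an integer. -/
def Admissible (μ : ℝ → ℕ) : Prop := IsConfig μ ∧ ∃ z : ℤ, weightedSum μ = (z : ℝ)

/-- The toppling operator `G_p`. -/
noncomputable def topple (p : ℝ) (μ : ℝ → ℕ) : ℝ → ℕ :=
  if 1 ≤ μ p then μ
  else
    let a := sSup ({0} ∪ {h | 1 ≤ μ h ∧ h < p})
    let b := sInf ({1} ∪ {h | 1 ≤ μ h ∧ p < h})
    let c := min (p - a) (b - p)
    fun x =>
      μ x + (if x = a + c then 1 else 0) + (if x = b - c then 1 else 0)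
        - (if x = a ∧ 0 < a then 1 else 0) - (if x = b ∧ b < 1 then 1 else 0)

/-- `μ` is the (necessarily unique) admissible configuration of minimal total mass
whose support contains `P`. -/
def IsMinimalConfig (P : Set ℝ) (μ : ℝ → ℕ) : Prop :=
  Admissible μ ∧ (∀ p ∈ P, 1 ≤ μ p) ∧
    ∀ ν : ℝ → ℕ, Admissible ν → (∀ p ∈ P, 1 ≤ ν p) → totalMass μ ≤ totalMass ν

/-- One full round of topplings `G_{p_n} ∘ ⋯ ∘ G_{p_1}` for `ps = [p_1, …, p_n]`. -/
noncomputable def relaxRound (ps : List ℝ) (μ : ℝ → ℕ) : ℝ → ℕ :=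
  ps.foldl (fun ν x => topple x ν) μ

/-- The length of relaxation `L(p_1, …, p_n)`: the least `N ≥ 1` such that
`(G_{p_n} ∘ ⋯ ∘ G_{p_1})^N` applied to the zero configuration is the unique
admissible configuration of minimal total mass whose support contains all the `pᵢ`. -/
noncomputable def relaxLength (ps : List ℝ) : ℕ :=
  sInf {N | 1 ≤ N ∧ IsMinimalConfig {x | x ∈ ps} ((relaxRound ps)^[N] fun _ => 0)}

/-- The locus of pairs `(p, q)` of distinct points of `(0,1)` with relaxation
length `N`. -/
def lengthLocus (N : ℕ) : Set (ℝ × ℝ) :=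
  {x : ℝ × ℝ | x.1 ∈ Set.Ioo (0 : ℝ) 1 ∧ x.2 ∈ Set.Ioo (0 : ℝ) 1 ∧ x.1 ≠ x.2 ∧
    relaxLength [x.1, x.2] = N}

noncomputable section

def leftNeighbor (μ : ℝ → ℕ) (p : ℝ) : ℝ := sSup ({0} ∪ {h | 1 ≤ μ h ∧ h < p})

def rightNeighbor (μ : ℝ → ℕ) (p : ℝ) : ℝ := sInf ({1} ∪ {h | 1 ≤ μ h ∧ p < h})

theorem topple_of_one_le {μ : ℝ → ℕ} {p : ℝ} (h : 1 ≤ μ p) : topple p μ = μ := if_pos h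

/-- For the neighbours `a`, `b` of `p`, whichever of `p - a` and `b - p` is smaller, the two new
grains land at `p` and at `a + b - p`. -/
theorem topple_of_eq_zero {μ : ℝ → ℕ} {p : ℝ} (h : μ p = 0) :
    topple p μ = fun x => μ x + (if x = p then 1 else 0)
      + (if x = leftNeighbor μ p + rightNeighbor μ p - p then 1 else 0)
      - (if x = leftNeighbor μ p ∧ 0 < leftNeighbor μ p then 1 else 0)
      - (if x = rightNeighbor μ p ∧ rightNeighbor μ p < 1 then 1 else 0) := by
  rw [topple, if_neg (by omega)]
  funext x
  simp only [leftNeighbor, rightNeighbor]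
  rcases min_cases (p - sSup ({0} ∪ {h | 1 ≤ μ h ∧ h < p}))
    (sInf ({1} ∪ {h | 1 ≤ μ h ∧ p < h}) - p) with ⟨hc, -⟩ | ⟨hc, -⟩ <;>
  rw [hc]
  · rw [add_sub_cancel, sub_sub_eq_add_sub, add_comm (sInf _)]; rfl
  · rw [sub_sub_cancel, add_sub_assoc', add_right_comm (μ x)]; rfl

theorem leftNeighbor_eq {μ : ℝ → ℕ} {p a : ℝ} (ha0 : 0 ≤ a) (hap : a < p)
    (ha : a = 0 ∨ μ a ≠ 0) (hgap : ∀ y, μ y ≠ 0 → y < p → y ≤ a) :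
    leftNeighbor μ p = a := by
  refine IsGreatest.csSup_eq ⟨?_, ?_⟩
  · rcases ha with rfl | ha
    · exact .inl rfl
    · exact .inr ⟨Nat.one_le_iff_ne_zero.2 ha, hap⟩
  · rintro y (rfl | ⟨hy, hyp⟩)
    exacts [ha0, hgap y (Nat.one_le_iff_ne_zero.1 hy) hyp]

theorem rightNeighbor_eq {μ : ℝ → ℕ} {p b : ℝ} (hb1 : b ≤ 1) (hpb : p < b)
    (hb : b = 1 ∨ μ b ≠ 0) (hgap : ∀ y, μ y ≠ 0 → p < y → b ≤ y) :
    rightNeighbor μ p = b := by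
  refine IsLeast.csInf_eq ⟨?_, ?_⟩
  · rcases hb with rfl | hb
    · exact .inl rfl
    · exact .inr ⟨Nat.one_le_iff_ne_zero.2 hb, hpb⟩
  · rintro y (rfl | ⟨hy, hyp⟩)
    exacts [hb1, hgap y (Nat.one_le_iff_ne_zero.1 hy) hyp]

theorem topple_eq_of_gap {μ : ℝ → ℕ} {p a b : ℝ} (hap : a < p) (hpb : p < b) (ha0 : 0 ≤ a)
    (hb1 : b ≤ 1) (ha : a = 0 ∨ μ a ≠ 0) (hb : b = 1 ∨ μ b ≠ 0)
    (hgap : ∀ y, μ y ≠ 0 → y ≤ a ∨ b ≤ y) :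
    topple p μ = fun x => μ x + (if x = p then 1 else 0) + (if x = a + b - p then 1 else 0)
      - (if x = a ∧ 0 < a then 1 else 0) - (if x = b ∧ b < 1 then 1 else 0) := by
  have hp : μ p = 0 := by
    by_contra h
    rcases hgap p h with h | h <;> linarith
  rw [topple_of_eq_zero hp,
    leftNeighbor_eq ha0 hap ha fun y hy hyp => (hgap y hy).resolve_right fun h => by linarith,
    rightNeighbor_eq hb1 hpb hb fun y hy hyp => (hgap y hy).resolve_left fun h => by linarith]

def ofMultiset (s : Multiset ℝ) : ℝ → ℕ := fun x => s.count x

theorem Multiset.count_erase {α : Type*} [DecidableEq α] (a b : α) (s : Multiset α) :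
    (s.erase b).count a = s.count a - if a = b then 1 else 0 := by
  split_ifs with h
  · rw [h, Multiset.count_erase_self]
  · rw [Multiset.count_erase_of_ne h, Nat.sub_zero]

theorem topple_ofMultiset {s : Multiset ℝ} {p a b : ℝ} (hap : a < p) (hpb : p < b)
    (ha : a = 0 ∨ a ∈ s) (hb : b = 1 ∨ b ∈ s)
    (hgap : ∀ y ∈ s, 0 < y ∧ y ≤ a ∨ b ≤ y ∧ y < 1) :
    topple p (ofMultiset s) = ofMultiset (p ::ₘ (a + b - p) ::ₘ (s.erase a).erase b) := by
  have hmem : ∀ y, ofMultiset s y ≠ 0 ↔ y ∈ s := fun y => Multiset.count_ne_zero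
  have ha0 : 0 ≤ a := ha.elim (·.ge) fun h => by rcases hgap a h with h | h <;> linarith
  have hb1 : b ≤ 1 := hb.elim (·.le) fun h => by rcases hgap b h with h | h <;> linarith
  rw [topple_eq_of_gap hap hpb ha0 hb1 (ha.imp_right (hmem a).2) (hb.imp_right (hmem b).2)
    fun y hy => (hgap y ((hmem y).1 hy)).imp And.right And.left]
  funext x
  simp only [ofMultiset, Multiset.count_cons, Multiset.count_erase]
  by_cases hxa : x = a
  · subst hxa
    have hxb : x ≠ b := by linarith
    simp only [if_neg (by linarith : x ≠ p), if_neg (by linarith : x ≠ x + b - p), if_neg hxb,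
      true_and, if_true]
    rcases ha0.lt_or_eq with hx | rfl
    · simp [hx, hxb]
    · simp [Multiset.count_eq_zero.2 fun h => by rcases hgap 0 h with h | h <;> linarith]
  by_cases hxb : x = b
  · subst hxb
    simp only [if_neg (by linarith : x ≠ p), if_neg (by linarith : x ≠ a + x - p), if_neg hxa,
      true_and, if_true]
    rcases hb1.lt_or_eq with hx | rfl
    · simp [hx, hxa]
    · simp [Multiset.count_eq_zero.2 fun h => by rcases hgap 1 h with h | h <;> linarith]
  simp only [hxa, hxb, false_and, if_false]
  omega

theorem support_ofMultiset (s : Multiset ℝ) : support (ofMultiset s) = s.toFinset := by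
  ext x; simp [ofMultiset]

theorem totalMass_ofMultiset (s : Multiset ℝ) : totalMass (ofMultiset s) = Multiset.card s := by
  rw [totalMass, finsum_eq_sum_of_support_subset _ (support_ofMultiset s).le]
  exact Multiset.toFinset_sum_count_eq s

theorem weightedSum_ofMultiset (s : Multiset ℝ) : weightedSum (ofMultiset s) = s.sum := by
  have : support (fun x => (ofMultiset s x : ℝ) * x) ⊆ s.toFinset := fun x hx => by
    rw [SetLike.mem_coe, Multiset.mem_toFinset, ← Multiset.count_ne_zero]
    exact Nat.cast_ne_zero.1 (left_ne_zero_of_mul hx)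
  rw [weightedSum, finsum_eq_sum_of_support_subset _ this, Finset.sum_multiset_count]
  simp [ofMultiset, nsmul_eq_mul]

theorem exists_eq_ofMultiset {μ : ℝ → ℕ} (hμ : (support μ).Finite) : ∃ s, μ = ofMultiset s :=
  ⟨Finsupp.toMultiset (Finsupp.ofSupportFinite μ hμ), funext fun x => by
    simp [ofMultiset, Finsupp.count_toMultiset, Finsupp.ofSupportFinite_coe]⟩

theorem admissible_ofMultiset_iff {s : Multiset ℝ} :
    Admissible (ofMultiset s) ↔ (∀ y ∈ s, y ∈ Ioo 0 1) ∧ ∃ z : ℤ, s.sum = z := by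
  simp only [Admissible, IsConfig, support_ofMultiset, weightedSum_ofMultiset, Finset.finite_toSet,
    true_and, Set.subset_def, SetLike.mem_coe, Multiset.mem_toFinset]

theorem three_le_card {s : Multiset ℝ} {p q : ℝ} (hp : p ∈ s) (hq : q ∈ s) (hpq : p ≠ q)
    (hp01 : p ∈ Ioo 0 1) (hq01 : q ∈ Ioo 0 1) (hsum : ∃ z : ℤ, s.sum = z) (h1 : p + q ≠ 1) :
    3 ≤ Multiset.card s := by
  obtain ⟨t, rfl⟩ := Multiset.exists_cons_of_mem hp
  obtain ⟨u, rfl⟩ := Multiset.exists_cons_of_mem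
    ((Multiset.mem_cons.1 hq).resolve_left hpq.symm)
  rcases Multiset.empty_or_exists_mem u with rfl | ⟨y, hy⟩
  · obtain ⟨z, hz⟩ := hsum
    simp only [Multiset.sum_cons, Multiset.sum_zero, add_zero] at hz
    have hz0 : 0 < z := by
      exact_mod_cast (show (0 : ℝ) < z by rw [← hz]; linarith [hp01.1, hq01.1])
    have hz2 : z < 2 := by
      exact_mod_cast (show (z : ℝ) < 2 by rw [← hz]; linarith [hp01.2, hq01.2])
    exact absurd (by rw [hz, show z = 1 by omega, Int.cast_one]) h1
  · have := Multiset.card_pos_iff_exists_mem.2 ⟨y, hy⟩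
    simp only [Multiset.card_cons]
    omega

theorem isMinimalConfig_ofMultiset {s : Multiset ℝ} {p q : ℝ} (hs : ∀ y ∈ s, y ∈ Ioo 0 1)
    (hsum : ∃ z : ℤ, s.sum = z) (hcard : Multiset.card s = 3) (hp : p ∈ s) (hq : q ∈ s)
    (hpq : p ≠ q) (h1 : p + q ≠ 1) :
    IsMinimalConfig {x | x ∈ [p, q]} (ofMultiset s) := by
  refine ⟨admissible_ofMultiset_iff.2 ⟨hs, hsum⟩, ?_, fun ν hν hνpq => ?_⟩
  · simp only [List.mem_cons, List.not_mem_nil, or_false, mem_ofPred_eq, forall_eq_or_imp,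
      forall_eq]
    exact ⟨Multiset.one_le_count_iff_mem.2 hp, Multiset.one_le_count_iff_mem.2 hq⟩
  obtain ⟨t, rfl⟩ := exists_eq_ofMultiset hν.1.1
  obtain ⟨-, htsum⟩ := admissible_ofMultiset_iff.1 hν
  have hmem : ∀ x, 1 ≤ ofMultiset t x → x ∈ t := fun x => Multiset.one_le_count_iff_mem.1
  rw [totalMass_ofMultiset, totalMass_ofMultiset, hcard]
  exact three_le_card (hmem p (hνpq p (by simp))) (hmem q (hνpq q (by simp))) hpq (hs p hp)
    (hs q hq) htsum h1

theorem not_isMinimalConfig_ofMultiset {s : Multiset ℝ} {p q : ℝ} (hp : p ∉ s) :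
    ¬ IsMinimalConfig {x | x ∈ [p, q]} (ofMultiset s) :=
  fun h => hp (Multiset.one_le_count_iff_mem.1 (h.2.1 p (by simp)))

theorem relaxLength_eq_two_iff {ps : List ℝ} :
    relaxLength ps = 2 ↔ ¬ IsMinimalConfig {x | x ∈ ps} (relaxRound ps fun _ => 0) ∧
      IsMinimalConfig {x | x ∈ ps} (relaxRound ps (relaxRound ps fun _ => 0)) := by
  set S := {N | 1 ≤ N ∧ IsMinimalConfig {x | x ∈ ps} ((relaxRound ps)^[N] fun _ => 0)}
  have h1 : 1 ∈ S ↔ IsMinimalConfig {x | x ∈ ps} (relaxRound ps fun _ => 0) := by simp [S]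
  have h2 : 2 ∈ S ↔ IsMinimalConfig {x | x ∈ ps} (relaxRound ps (relaxRound ps fun _ => 0)) := by
    simp [S]
  rw [← h1, ← h2]
  change sInf S = 2 ↔ _
  constructor
  · intro h
    have hne : S.Nonempty := Nat.nonempty_of_pos_sInf (by omega)
    refine ⟨fun h1S => ?_, h ▸ Nat.sInf_mem hne⟩
    have := Nat.sInf_le h1S
    omega
  · rintro ⟨h1S, h2S⟩
    refine le_antisymm (Nat.sInf_le h2S) (le_csInf ⟨2, h2S⟩ fun n hn => ?_)
    by_contra! hn2
    interval_cases n
    exacts [absurd hn.1 (by norm_num), h1S hn]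

theorem relaxRound_pair (p q : ℝ) (μ : ℝ → ℕ) :
    relaxRound [p, q] μ = topple q (topple p μ) := rfl

theorem topple_zero {p : ℝ} (hp0 : 0 < p) (hp1 : p < 1) :
    topple p (fun _ => 0) = ofMultiset {p, 1 - p} := by
  rw [show (fun _ => 0 : ℝ → ℕ) = ofMultiset 0 from rfl,
    topple_ofMultiset (a := 0) (b := 1) hp0 hp1 (.inl rfl) (.inl rfl) (by simp)]
  simp

theorem topple_pair_of_lt {x y : ℝ} (hx : 0 < x) (hxy : x < y) (hy : y ≤ 1 / 2) :
    topple x (ofMultiset {y, 1 - y}) = ofMultiset {x, y - x, 1 - y} := by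
  rw [topple_ofMultiset (a := 0) (b := y) hx hxy (.inl rfl) (by simp) (by
    simp only [Multiset.insert_eq_cons, Multiset.forall_mem_cons, Multiset.mem_singleton, forall_eq]
    exact ⟨.inr ⟨le_rfl, by linarith⟩, .inr ⟨by linarith, by linarith⟩⟩)]
  congr 1
  ring_nf
  ext z
  simp only [Multiset.insert_eq_cons, Multiset.count_cons, Multiset.count_erase,
    Multiset.count_singleton]
  split_ifs <;> first | omega | (exfalso; linarith)

theorem topple_pair_of_lt_one_sub {p q : ℝ} (hp : 0 < p) (hpq : p < q) (hq : q < 1 - p) :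
    topple q (ofMultiset {p, 1 - p}) = ofMultiset {q, 1 - q} := by
  rw [topple_ofMultiset (a := p) (b := 1 - p) hpq hq (by simp) (by simp) (by
    simp only [Multiset.insert_eq_cons, Multiset.forall_mem_cons, Multiset.mem_singleton, forall_eq]
    exact ⟨.inl ⟨hp, le_rfl⟩, .inr ⟨le_rfl, by linarith⟩⟩)]
  congr 1
  ring_nf
  ext z
  simp only [Multiset.insert_eq_cons, Multiset.count_cons, Multiset.count_erase,
    Multiset.count_singleton]
  split_ifs <;> omega

theorem topple_pair_of_one_sub_lt {p q : ℝ} (hp : p ≤ 1 / 2) (hpq : 1 - p < q) (hq : q < 1) :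
    topple q (ofMultiset {p, 1 - p}) = ofMultiset {q, 2 - p - q, p} := by
  rw [topple_ofMultiset (a := 1 - p) (b := 1) hpq hq (by simp) (.inl rfl) (by
    simp only [Multiset.insert_eq_cons, Multiset.forall_mem_cons, Multiset.mem_singleton, forall_eq]
    exact ⟨.inl ⟨by linarith, by linarith⟩, .inl ⟨by linarith, le_rfl⟩⟩)]
  congr 1
  ring_nf
  ext z
  simp only [Multiset.insert_eq_cons, Multiset.count_cons, Multiset.count_erase,
    Multiset.count_singleton]
  split_ifs <;> first | omega | (exfalso; linarith)

theorem topple_triple_of_two_mul_lt {x y : ℝ} (hx : 0 < x) (hxy : 2 * x < y) (hy : y < 1 / 2) :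
    topple y (ofMultiset {x, y - x, 1 - y}) = ofMultiset {y, 1 - x - y, x} := by
  rw [topple_ofMultiset (a := y - x) (b := 1 - y) (by linarith) (by linarith) (by simp) (by simp)
    (by
    simp only [Multiset.insert_eq_cons, Multiset.forall_mem_cons, Multiset.mem_singleton, forall_eq]
    exact ⟨.inl ⟨hx, by linarith⟩, .inl ⟨by linarith, le_rfl⟩, .inr ⟨le_rfl, by linarith⟩⟩)]
  congr 1
  ring_nf
  ext z
  simp only [Multiset.insert_eq_cons, Multiset.count_cons, Multiset.count_erase,
    Multiset.count_singleton]
  split_ifs <;> omega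

theorem topple_triple_of_lt_two_mul {x y : ℝ} (hxy : x < y) (hyx : y < 2 * x) (hy : y < 1 / 2) :
    topple y (ofMultiset {x, y - x, 1 - y}) = ofMultiset {y, 1 + x - 2 * y, y - x} := by
  rw [topple_ofMultiset (a := x) (b := 1 - y) hxy (by linarith) (by simp) (by simp) (by
    simp only [Multiset.insert_eq_cons, Multiset.forall_mem_cons, Multiset.mem_singleton, forall_eq]
    exact ⟨.inl ⟨by linarith, le_rfl⟩, .inl ⟨by linarith, by linarith⟩,
      .inr ⟨le_rfl, by linarith⟩⟩)]
  congr 1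
  ring_nf
  ext z
  simp only [Multiset.insert_eq_cons, Multiset.count_cons, Multiset.count_erase,
    Multiset.count_singleton]
  split_ifs <;> omega

theorem topple_triple_of_lt_three_mul_sub_one {p q : ℝ} (hp : p < 1 / 2) (hpq : p < 2 * q)
    (hq : q < 3 * p - 1) :
    topple q (ofMultiset {p, 1 + q - 2 * p, p - q}) = ofMultiset {q, 1 - p - q, p} := by
  rw [topple_ofMultiset (a := p - q) (b := 1 + q - 2 * p) (by linarith) (by linarith) (by simp)
    (by simp) (by
    simp only [Multiset.insert_eq_cons, Multiset.forall_mem_cons, Multiset.mem_singleton, forall_eq]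
    exact ⟨.inr ⟨by linarith, by linarith⟩, .inr ⟨le_rfl, by linarith⟩,
      .inl ⟨by linarith, le_rfl⟩⟩)]
  congr 1
  ring_nf
  ext z
  simp only [Multiset.insert_eq_cons, Multiset.count_cons, Multiset.count_erase,
    Multiset.count_singleton]
  split_ifs <;> omega

theorem topple_triple_of_three_mul_sub_one_lt {p q : ℝ} (hpq : p < 2 * q) (hqp : q < p)
    (hq : 3 * p - 1 < q) :
    topple q (ofMultiset {p, 1 + q - 2 * p, p - q}) =
      ofMultiset {q, 2 * p - 2 * q, 1 + q - 2 * p} := by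
  rw [topple_ofMultiset (a := p - q) (b := p) (by linarith) hqp (by simp) (by simp) (by
    simp only [Multiset.insert_eq_cons, Multiset.forall_mem_cons, Multiset.mem_singleton, forall_eq]
    exact ⟨.inr ⟨le_rfl, by linarith⟩, .inr ⟨by linarith, by linarith⟩,
      .inl ⟨by linarith, le_rfl⟩⟩)]
  congr 1
  ring_nf
  ext z
  simp only [Multiset.insert_eq_cons, Multiset.count_cons, Multiset.count_erase,
    Multiset.count_singleton]
  split_ifs <;> omega

theorem relaxLength_eq_two_iff_of_lt {p q : ℝ} (hq : 0 < q) (hqp : q < p) (hp : p < 1 / 2) :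
    relaxLength [p, q] = 2 ↔
      IsMinimalConfig {x | x ∈ [p, q]} (topple q (topple p (ofMultiset {q, p - q, 1 - p}))) := by
  rw [relaxLength_eq_two_iff, relaxRound_pair, topple_zero (by linarith) (by linarith),
    topple_pair_of_lt hq hqp hp.le, relaxRound_pair, and_iff_right_iff_imp]
  refine fun _ => not_isMinimalConfig_ofMultiset ?_
  simp only [Multiset.insert_eq_cons, Multiset.mem_cons, Multiset.mem_singleton, not_or]
  exact ⟨hqp.ne', (show p - q < p by linarith).ne', (show p < 1 - p by linarith).ne⟩

theorem relaxLength_eq_two_iff_of_lt_one_sub {p q : ℝ} (hp : 0 < p) (hpq : p < q)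
    (hq : q < 1 - p) :
    relaxLength [p, q] = 2 ↔
      IsMinimalConfig {x | x ∈ [p, q]} (topple q (topple p (ofMultiset {q, 1 - q}))) := by
  rw [relaxLength_eq_two_iff, relaxRound_pair, topple_zero hp (by linarith),
    topple_pair_of_lt_one_sub hp hpq hq, relaxRound_pair, and_iff_right_iff_imp]
  refine fun _ => not_isMinimalConfig_ofMultiset ?_
  simp only [Multiset.insert_eq_cons, Multiset.mem_cons, Multiset.mem_singleton, not_or]
  exact ⟨hpq.ne, (show p < 1 - q by linarith).ne⟩

theorem relaxLength_eq_two_of_lt_div_two {p q : ℝ} (hq : 0 < q) (hqp : q < p / 2)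
    (hp : p < 1 / 2) : relaxLength [p, q] = 2 := by
  rw [relaxLength_eq_two_iff_of_lt hq (by linarith) hp,
    topple_triple_of_two_mul_lt hq (by linarith) hp,
    topple_of_one_le (Multiset.one_le_count_iff_mem.2 (by simp))]
  refine isMinimalConfig_ofMultiset ?_ ⟨1, by simp; ring⟩ rfl (by simp) (by simp)
    (show q < p by linarith).ne' (show p + q < 1 by linarith).ne
  simp only [Multiset.insert_eq_cons, Multiset.forall_mem_cons, Multiset.mem_singleton,
    forall_eq, mem_Ioo]
  and_intros <;> linarith

theorem relaxLength_eq_two_of_lt_three_mul_sub_one {p q : ℝ} (hpq : p < 2 * q)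
    (hq : q < 3 * p - 1) (hp : p < 1 / 2) : relaxLength [p, q] = 2 := by
  rw [relaxLength_eq_two_iff_of_lt (by linarith) (by linarith) hp,
    topple_triple_of_lt_two_mul (by linarith) hpq hp,
    topple_triple_of_lt_three_mul_sub_one hp hpq hq]
  refine isMinimalConfig_ofMultiset ?_ ⟨1, by simp; ring⟩ rfl (by simp) (by simp)
    (show q < p by linarith).ne' (show p + q < 1 by linarith).ne
  simp only [Multiset.insert_eq_cons, Multiset.forall_mem_cons, Multiset.mem_singleton,
    forall_eq, mem_Ioo]
  and_intros <;> linarith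

theorem relaxLength_ne_two_of_three_mul_sub_one_lt {p q : ℝ} (hpq : p < 2 * q) (hqp : q < p)
    (hq : 3 * p - 1 < q) : relaxLength [p, q] ≠ 2 := by
  have hp : p < 1 / 2 := by linarith
  rw [ne_eq, relaxLength_eq_two_iff_of_lt (by linarith) hqp hp,
    topple_triple_of_lt_two_mul hqp hpq hp, topple_triple_of_three_mul_sub_one_lt hpq hqp hq]
  refine not_isMinimalConfig_ofMultiset ?_
  simp only [Multiset.insert_eq_cons, Multiset.mem_cons, Multiset.mem_singleton, not_or]
  exact ⟨hqp.ne', (show 2 * p - 2 * q < p by linarith).ne', (show p < 1 + q - 2 * p by linarith).ne⟩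

theorem relaxLength_ne_two_of_lt_two_mul {p q : ℝ} (hpq : p < q) (hqp : q < 2 * p)
    (hq : q < 1 / 2) : relaxLength [p, q] ≠ 2 := by
  rw [ne_eq, relaxLength_eq_two_iff_of_lt_one_sub (by linarith) hpq (by linarith),
    topple_pair_of_lt (by linarith) hpq hq.le, topple_triple_of_lt_two_mul hpq hqp hq]
  refine not_isMinimalConfig_ofMultiset ?_
  simp only [Multiset.insert_eq_cons, Multiset.mem_cons, Multiset.mem_singleton, not_or]
  exact ⟨hpq.ne, (show p < 1 + p - 2 * q by linarith).ne, (show q - p < p by linarith).ne'⟩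

theorem relaxLength_eq_two_of_two_mul_lt {p q : ℝ} (hp : 0 < p) (hpq : 2 * p < q)
    (hq : q < 1 / 2) : relaxLength [p, q] = 2 := by
  rw [relaxLength_eq_two_iff_of_lt_one_sub hp (by linarith) (by linarith),
    topple_pair_of_lt hp (by linarith) hq.le, topple_triple_of_two_mul_lt hp hpq hq]
  refine isMinimalConfig_ofMultiset ?_ ⟨1, by simp; ring⟩ rfl (by simp) (by simp)
    (show p < q by linarith).ne (show p + q < 1 by linarith).ne
  simp only [Multiset.insert_eq_cons, Multiset.forall_mem_cons, Multiset.mem_singleton,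
    forall_eq, mem_Ioo]
  and_intros <;> linarith

theorem relaxLength_eq_two_of_half_lt {p q : ℝ} (hp : 0 < p) (hq : 1 / 2 < q)
    (hpq : q < 1 - p) : relaxLength [p, q] = 2 := by
  have hpair : ({q, 1 - q} : Multiset ℝ) = {1 - q, 1 - (1 - q)} := by
    rw [sub_sub_cancel, Multiset.pair_comm]
  rw [relaxLength_eq_two_iff_of_lt_one_sub hp (by linarith) hpq, hpair,
    topple_pair_of_lt hp (by linarith) (by linarith), sub_sub_cancel,
    topple_of_one_le (Multiset.one_le_count_iff_mem.2 (by simp))]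
  refine isMinimalConfig_ofMultiset ?_ ⟨1, by simp; ring⟩ rfl (by simp) (by simp)
    (show p < q by linarith).ne (show p + q < 1 by linarith).ne
  simp only [Multiset.insert_eq_cons, Multiset.forall_mem_cons, Multiset.mem_singleton,
    forall_eq, mem_Ioo]
  and_intros <;> linarith

theorem relaxLength_ne_two_of_one_sub_lt {p q : ℝ} (hp : 0 < p) (hp' : p < 1 / 2)
    (hpq : 1 - p < q) (hq : q < 1) : relaxLength [p, q] ≠ 2 := by
  refine fun h => (relaxLength_eq_two_iff.1 h).1 ?_
  rw [relaxRound_pair, topple_zero hp (by linarith), topple_pair_of_one_sub_lt hp'.le hpq hq]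
  refine isMinimalConfig_ofMultiset ?_ ⟨2, by simp; ring⟩ rfl (by simp) (by simp)
    (show p < q by linarith).ne (show 1 < p + q by linarith).ne'
  simp only [Multiset.insert_eq_cons, Multiset.forall_mem_cons, Multiset.mem_singleton,
    forall_eq, mem_Ioo]
  and_intros <;> linarith

def reflectConfig (μ : ℝ → ℕ) : ℝ → ℕ := fun x => μ (1 - x)

theorem sSup_image_one_sub {S : Set ℝ} (hne : S.Nonempty) (hS : BddBelow S) :
    sSup ((fun x => 1 - x) '' S) = 1 - sInf S :=
  ((OrderIso.subLeft (1 : ℝ)).map_csInf' hne hS).symm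

theorem sInf_image_one_sub {S : Set ℝ} (hne : S.Nonempty) (hS : BddAbove S) :
    sInf ((fun x => 1 - x) '' S) = 1 - sSup S :=
  ((OrderIso.subLeft (1 : ℝ)).map_csSup' hne hS).symm

theorem leftNeighbor_reflectConfig (μ : ℝ → ℕ) (p : ℝ) :
    leftNeighbor (reflectConfig μ) p = 1 - rightNeighbor μ (1 - p) := by
  have : {0} ∪ {h | 1 ≤ reflectConfig μ h ∧ h < p} =
      (fun x => 1 - x) '' ({1} ∪ {h | 1 ≤ μ h ∧ 1 - p < h}) := by
    rw [image_eq_preimage_of_inverse (sub_sub_cancel 1) (sub_sub_cancel 1)]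
    ext y
    simp only [reflectConfig, mem_union, mem_singleton_iff, mem_ofPred_eq, mem_preimage,
      sub_eq_self, sub_lt_sub_iff_left]
  rw [leftNeighbor, this, sSup_image_one_sub ⟨1, .inl rfl⟩ ⟨min 1 (1 - p), ?_⟩, rightNeighbor]
  rintro y (rfl | ⟨-, hy⟩)
  exacts [min_le_left _ _, (min_le_right _ _).trans hy.le]

theorem rightNeighbor_reflectConfig (μ : ℝ → ℕ) (p : ℝ) :
    rightNeighbor (reflectConfig μ) p = 1 - leftNeighbor μ (1 - p) := by
  have : {1} ∪ {h | 1 ≤ reflectConfig μ h ∧ p < h} =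
      (fun x => 1 - x) '' ({0} ∪ {h | 1 ≤ μ h ∧ h < 1 - p}) := by
    rw [image_eq_preimage_of_inverse (sub_sub_cancel 1) (sub_sub_cancel 1)]
    ext y
    simp only [reflectConfig, mem_union, mem_singleton_iff, mem_ofPred_eq, mem_preimage,
      sub_lt_sub_iff_left, sub_eq_zero, eq_comm (a := (1 : ℝ))]
  rw [rightNeighbor, this, sInf_image_one_sub ⟨0, .inl rfl⟩ ⟨max 0 (1 - p), ?_⟩, leftNeighbor]
  rintro y (rfl | ⟨-, hy⟩)
  exacts [le_max_left _ _, hy.le.trans (le_max_right _ _)]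

theorem topple_reflectConfig (p : ℝ) (μ : ℝ → ℕ) :
    topple p (reflectConfig μ) = reflectConfig (topple (1 - p) μ) := by
  rcases Nat.eq_zero_or_pos (μ (1 - p)) with h | h
  · rw [topple_of_eq_zero (μ := reflectConfig μ) h, topple_of_eq_zero h,
      leftNeighbor_reflectConfig, rightNeighbor_reflectConfig]
    funext x
    set a := leftNeighbor μ (1 - p)
    set b := rightNeighbor μ (1 - p)
    have e1 : (1 - x = 1 - p) ↔ (x = p) := sub_right_inj
    have e2 : (1 - x = a + b - (1 - p)) ↔ (x = 1 - b + (1 - a) - p) := by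
      constructor <;> intro <;> linarith
    have e3 : (1 - x = a ∧ 0 < a) ↔ (x = 1 - a ∧ 1 - a < 1) := by
      constructor <;> rintro ⟨h1, h2⟩ <;> exact ⟨by linarith, by linarith⟩
    have e4 : (1 - x = b ∧ b < 1) ↔ (x = 1 - b ∧ 0 < 1 - b) := by
      constructor <;> rintro ⟨h1, h2⟩ <;> exact ⟨by linarith, by linarith⟩
    simp only [reflectConfig, e1, e2, e3, e4]
    omega
  · rw [topple_of_one_le (μ := reflectConfig μ) h, topple_of_one_le h]

theorem relaxRound_reflectConfig (ps : List ℝ) (μ : ℝ → ℕ) :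
    relaxRound ps (reflectConfig μ) = reflectConfig (relaxRound (ps.map (1 - ·)) μ) := by
  induction ps generalizing μ with
  | nil => rfl
  | cons p ps ih => exact (congrArg _ (topple_reflectConfig p μ)).trans (ih _)

theorem reflectConfig_reflectConfig (μ : ℝ → ℕ) : reflectConfig (reflectConfig μ) = μ :=
  funext fun x => congrArg μ (sub_sub_cancel 1 x)

theorem totalMass_reflectConfig (μ : ℝ → ℕ) : totalMass (reflectConfig μ) = totalMass μ :=
  finsum_comp_equiv (Equiv.subLeft 1)

theorem reflectConfig_ofMultiset (s : Multiset ℝ) :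
    reflectConfig (ofMultiset s) = ofMultiset (s.map (1 - ·)) := by
  funext x
  conv_rhs => rw [← sub_sub_cancel 1 x]
  exact (Multiset.count_map_eq_count' _ s sub_right_injective _).symm

theorem admissible_reflectConfig {μ : ℝ → ℕ} (h : Admissible μ) : Admissible (reflectConfig μ) := by
  obtain ⟨s, rfl⟩ := exists_eq_ofMultiset h.1.1
  obtain ⟨hs, z, hz⟩ := admissible_ofMultiset_iff.1 h
  rw [reflectConfig_ofMultiset, admissible_ofMultiset_iff]
  refine ⟨fun y hy => ?_, Multiset.card s - z, ?_⟩
  · obtain ⟨x, hx, rfl⟩ := Multiset.mem_map.1 hy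
    exact ⟨by linarith [(hs x hx).2], by linarith [(hs x hx).1]⟩
  · rw [Multiset.sum_map_sub, Multiset.map_id', hz]
    simp

theorem IsMinimalConfig.reflectConfig {P : Set ℝ} {μ : ℝ → ℕ} (h : IsMinimalConfig P μ) :
    IsMinimalConfig ((1 - ·) ⁻¹' P) (reflectConfig μ) := by
  refine ⟨admissible_reflectConfig h.1, fun p hp => h.2.1 _ hp, fun ν hν hνP => ?_⟩
  rw [totalMass_reflectConfig, ← totalMass_reflectConfig ν]
  exact h.2.2 _ (admissible_reflectConfig hν) fun p hp =>
    hνP (1 - p) (by rwa [mem_preimage, sub_sub_cancel])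

theorem isMinimalConfig_reflectConfig_iff {P : Set ℝ} {μ : ℝ → ℕ} :
    IsMinimalConfig P (reflectConfig μ) ↔ IsMinimalConfig ((1 - ·) ⁻¹' P) μ := by
  refine ⟨fun h => reflectConfig_reflectConfig μ ▸ h.reflectConfig, fun h => ?_⟩
  simpa [preimage_preimage] using h.reflectConfig

theorem relaxLength_map_one_sub (ps : List ℝ) : relaxLength (ps.map (1 - ·)) = relaxLength ps := by
  have hsemi : Semiconj reflectConfig (relaxRound (ps.map (1 - ·))) (relaxRound ps) :=
    fun μ => (relaxRound_reflectConfig ps μ).symm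
  have hP : (1 - ·) ⁻¹' {x | x ∈ ps} = {x | x ∈ ps.map (1 - ·)} := by
    ext x
    simp only [mem_preimage, mem_ofPred_eq, List.mem_map]
    exact ⟨fun h => ⟨1 - x, h, sub_sub_cancel 1 x⟩, by rintro ⟨y, hy, rfl⟩; rwa [sub_sub_cancel]⟩
  simp only [relaxLength]
  congr 1
  ext N
  have hN : (relaxRound ps)^[N] (fun _ => 0) =
      reflectConfig ((relaxRound (ps.map (1 - ·)))^[N] fun _ => 0) :=
    (hsemi.iterate_right N (fun _ => 0)).symm
  rw [mem_ofPred_eq, mem_ofPred_eq, hN, isMinimalConfig_reflectConfig_iff, hP]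

theorem volume_regionBetween_of_sub_eq {f g : ℝ → ℝ} {l u : ℝ} (c d : ℝ)
    (hgf : ∀ x, g x - f x = c * x + d) (hf : Continuous f) (hg : Continuous g) (hlu : l ≤ u)
    (hfg : ∀ x ∈ Ioo l u, f x ≤ g x) :
    volume (regionBetween f g (Ioo l u)) = ENNReal.ofReal ((u - l) * (c * (u + l) / 2 + d)) := by
  rw [Measure.volume_eq_prod, volume_regionBetween_eq_integral
    (hf.integrableOn_Icc.mono_set Ioo_subset_Icc_self)
    (hg.integrableOn_Icc.mono_set Ioo_subset_Icc_self) measurableSet_Ioo hfg,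
    ← integral_Ioc_eq_integral_Ioo, ← intervalIntegral.integral_of_le hlu]
  simp only [Pi.sub_apply, hgf]
  rw [intervalIntegral.integral_add (f := fun x => c * x) (g := fun _ => d)
    ((continuous_const.mul continuous_id).intervalIntegrable _ _) intervalIntegrable_const,
    intervalIntegral.integral_const_mul, integral_id, intervalIntegral.integral_const, smul_eq_mul]
  congr 1
  ring

/-- Up to `exceptionalLines`, the part of `lengthLocus 2` where `p < 1/2`. -/
def lowerLocus : Set (ℝ × ℝ) :=
  regionBetween (fun _ => 0) (· / 2) (Ioo 0 (1 / 2)) ∪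
    regionBetween (· / 2) (3 * · - 1) (Ioo (2 / 5) (1 / 2)) ∪
    regionBetween (2 * ·) (fun _ => 1 / 2) (Ioo 0 (1 / 4)) ∪
    regionBetween (fun _ => 1 / 2) (1 - ·) (Ioo 0 (1 / 2))

theorem mem_lowerLocus_iff {p q : ℝ} (hp0 : 0 < p) (hp : p < 1 / 2) :
    (p, q) ∈ lowerLocus ↔ (0 < q ∧ q < p / 2) ∨ (p / 2 < q ∧ q < 3 * p - 1) ∨
      (2 * p < q ∧ q < 1 / 2) ∨ (1 / 2 < q ∧ q < 1 - p) := by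
  simp only [lowerLocus, regionBetween, mem_union, mem_ofPred_eq, mem_Ioo]
  constructor
  · rintro (((⟨-, h⟩ | ⟨-, h⟩) | ⟨-, h⟩) | ⟨-, h⟩)
    exacts [.inl h, .inr (.inl h), .inr (.inr (.inl h)), .inr (.inr (.inr h))]
  · rintro (h | h | h | h)
    · exact .inl (.inl (.inl ⟨⟨hp0, hp⟩, h⟩))
    · exact .inl (.inl (.inr ⟨⟨by linarith [h.1, h.2], hp⟩, h⟩))
    · exact .inl (.inr ⟨⟨hp0, by linarith [h.1, h.2]⟩, h⟩)
    · exact .inr ⟨⟨hp0, hp⟩, h⟩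

theorem lowerLocus_subset : lowerLocus ⊆ Ioo 0 (1 / 2) ×ˢ Ioo 0 1 := by
  rintro ⟨p, q⟩ (((⟨⟨h1, h2⟩, h3, h4⟩ | ⟨⟨h1, h2⟩, h3, h4⟩) | ⟨⟨h1, h2⟩, h3, h4⟩) |
    ⟨⟨h1, h2⟩, h3, h4⟩) <;>
  exact ⟨⟨by linarith, by linarith⟩, by dsimp only at h3 h4; constructor <;> linarith⟩

theorem measurableSet_lowerLocus : MeasurableSet lowerLocus := by
  unfold lowerLocus
  refine (((?_ : MeasurableSet _).union ?_).union ?_).union ?_ <;>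
  exact measurableSet_regionBetween (by fun_prop) (by fun_prop) measurableSet_Ioo

theorem volume_lowerLocus : volume lowerLocus = ENNReal.ofReal (21 / 80) := by
  rw [lowerLocus, measure_union ?_ (measurableSet_regionBetween (by fun_prop) (by fun_prop)
      measurableSet_Ioo), measure_union ?_ (measurableSet_regionBetween (by fun_prop)
      (by fun_prop) measurableSet_Ioo), measure_union ?_ (measurableSet_regionBetween
      (by fun_prop) (by fun_prop) measurableSet_Ioo),
    volume_regionBetween_of_sub_eq (1 / 2) 0 (fun x => by ring) (by fun_prop) (by fun_prop)
      (by norm_num) fun x hx => by linarith [hx.1],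
    volume_regionBetween_of_sub_eq (5 / 2) (-1) (fun x => by ring) (by fun_prop) (by fun_prop)
      (by norm_num) fun x hx => by linarith [hx.1],
    volume_regionBetween_of_sub_eq (-2) (1 / 2) (fun x => by ring) (by fun_prop) (by fun_prop)
      (by norm_num) fun x hx => by linarith [hx.2],
    volume_regionBetween_of_sub_eq (-1) (1 / 2) (fun x => by ring) (by fun_prop) (by fun_prop)
      (by norm_num) fun x hx => by linarith [hx.2],
    ← ENNReal.ofReal_add (by norm_num) (by norm_num),
    ← ENNReal.ofReal_add (by norm_num) (by norm_num),
    ← ENNReal.ofReal_add (by norm_num) (by norm_num)]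
  · norm_num
  all_goals
    refine Set.disjoint_left.2 fun ⟨p, q⟩ hx hy => ?_
    simp only [mem_union, regionBetween, mem_ofPred_eq, mem_Ioo] at hx hy
    obtain ⟨⟨_, _⟩, _, _⟩ := hy
  · obtain ⟨⟨_, _⟩, _, _⟩ := hx
    linarith
  · rcases hx with ⟨⟨_, _⟩, _, _⟩ | ⟨⟨_, _⟩, _, _⟩ <;> linarith
  · rcases hx with ((⟨⟨_, _⟩, _, _⟩ | ⟨⟨_, _⟩, _, _⟩) | ⟨⟨_, _⟩, _, _⟩) <;> linarith

def reflectPair (x : ℝ × ℝ) : ℝ × ℝ := (1 - x.1, 1 - x.2)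

theorem measurePreserving_reflectPair : MeasurePreserving reflectPair volume volume := by
  rw [Measure.volume_eq_prod]
  exact (Measure.measurePreserving_sub_left volume 1).prod
    (Measure.measurePreserving_sub_left volume 1)

theorem volume_union_reflectPair_preimage_lowerLocus :
    volume (lowerLocus ∪ reflectPair ⁻¹' lowerLocus) = 21 / 40 := by
  have hdisj : Disjoint lowerLocus (reflectPair ⁻¹' lowerLocus) :=
    Set.disjoint_left.2 fun x hx hx' => by
      have := (lowerLocus_subset hx).1.2
      have := (lowerLocus_subset hx').1.2
      simp only [reflectPair] at this
      linarith
  rw [measure_union hdisj (measurableSet_lowerLocus.preimage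
      measurePreserving_reflectPair.measurable),
    measurePreserving_reflectPair.measure_preimage measurableSet_lowerLocus.nullMeasurableSet,
    volume_lowerLocus, ← ENNReal.ofReal_add (by norm_num) (by norm_num),
    show (21 / 80 + 21 / 80 : ℝ) = 21 / 40 by norm_num, ENNReal.ofReal_div_of_pos (by norm_num)]
  norm_num

theorem volume_setOf_snd_eq {f : ℝ → ℝ} (hf : Measurable f) :
    volume {x : ℝ × ℝ | x.2 = f x.1} = 0 := by
  have hm : MeasurableSet {x : ℝ × ℝ | x.2 = f x.1} :=
    measurableSet_eq_fun measurable_snd (hf.comp measurable_fst)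
  rw [Measure.volume_eq_prod, Measure.prod_apply hm]
  simp [preimage]

theorem volume_setOf_fst_eq (c : ℝ) : volume {x : ℝ × ℝ | x.1 = c} = 0 := by
  rw [show {x : ℝ × ℝ | x.1 = c} = {c} ×ˢ univ by ext; simp, Measure.volume_eq_prod,
    Measure.prod_prod]
  simp

/-- The boundaries of the case analysis behind `lowerLocus`, and the line `p = 1/2`. -/
def exceptionalLines : Set (ℝ × ℝ) :=
  {x | x.1 = 1 / 2} ∪ {x | x.2 = x.1 / 2} ∪ {x | x.2 = 3 * x.1 - 1} ∪ {x | x.2 = x.1} ∪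
    {x | x.2 = 2 * x.1} ∪ {x | x.2 = 1 / 2} ∪ {x | x.2 = 1 - x.1}

theorem volume_exceptionalLines : volume exceptionalLines = 0 := by
  simp only [exceptionalLines, measure_union_null_iff]
  exact ⟨⟨⟨⟨⟨⟨volume_setOf_fst_eq _, volume_setOf_snd_eq (f := (· / 2)) (by fun_prop)⟩,
    volume_setOf_snd_eq (f := (3 * · - 1)) (by fun_prop)⟩, volume_setOf_snd_eq measurable_id⟩,
    volume_setOf_snd_eq (f := (2 * ·)) (by fun_prop)⟩, volume_setOf_snd_eq measurable_const⟩,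
    volume_setOf_snd_eq (f := (1 - ·)) (by fun_prop)⟩

theorem relaxLength_eq_two_iff_mem_lowerLocus {p q : ℝ} (hp0 : 0 < p) (hp : p < 1 / 2)
    (hq0 : 0 < q) (hq1 : q < 1) (hx : (p, q) ∉ exceptionalLines) :
    relaxLength [p, q] = 2 ↔ (p, q) ∈ lowerLocus := by
  simp only [exceptionalLines, mem_union, mem_ofPred_eq, not_or] at hx
  obtain ⟨⟨⟨⟨⟨⟨-, h1⟩, h2⟩, h3⟩, h4⟩, h5⟩, h6⟩ := hx
  rw [mem_lowerLocus_iff hp0 hp]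
  rcases lt_or_gt_of_ne h3 with hqp | hpq
  · rcases lt_or_gt_of_ne h1 with hq | hq
    · exact iff_of_true (relaxLength_eq_two_of_lt_div_two hq0 hq hp) (.inl ⟨hq0, hq⟩)
    rcases lt_or_gt_of_ne h2 with hq' | hq'
    · exact iff_of_true (relaxLength_eq_two_of_lt_three_mul_sub_one (by linarith) hq' hp)
        (.inr (.inl ⟨hq, hq'⟩))
    refine iff_of_false (relaxLength_ne_two_of_three_mul_sub_one_lt (by linarith) hqp hq') ?_
    rintro (⟨-, h⟩ | ⟨-, h⟩ | ⟨h, -⟩ | ⟨h, -⟩) <;> linarith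
  rcases lt_or_gt_of_ne h6 with hq | hq
  · rcases lt_or_gt_of_ne h5 with hq' | hq'
    · rcases lt_or_gt_of_ne h4 with hq'' | hq''
      · refine iff_of_false (relaxLength_ne_two_of_lt_two_mul hpq hq'' hq') ?_
        rintro (⟨-, h⟩ | ⟨-, h⟩ | ⟨h, -⟩ | ⟨h, -⟩) <;> linarith
      exact iff_of_true (relaxLength_eq_two_of_two_mul_lt hp0 hq'' hq')
        (.inr (.inr (.inl ⟨hq'', hq'⟩)))
    exact iff_of_true (relaxLength_eq_two_of_half_lt hp0 hq' hq) (.inr (.inr (.inr ⟨hq', hq⟩)))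
  refine iff_of_false (relaxLength_ne_two_of_one_sub_lt hp0 hp hq hq1) ?_
  rintro (⟨-, h⟩ | ⟨-, h⟩ | ⟨-, h⟩ | ⟨-, h⟩) <;> linarith

theorem mem_lengthLocus_two_iff {x : ℝ × ℝ}
    (hx : x ∉ exceptionalLines ∪ reflectPair ⁻¹' exceptionalLines) :
    x ∈ lengthLocus 2 ↔ x ∈ lowerLocus ∪ reflectPair ⁻¹' lowerLocus := by
  obtain ⟨p, q⟩ := x
  obtain ⟨hx, hx'⟩ := not_or.1 hx
  have hupper : reflectPair (p, q) ∈ lowerLocus → p ∈ Ioo (1 / 2) 1 ∧ q ∈ Ioo 0 1 := fun h => by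
    obtain ⟨⟨h1, h2⟩, h3, h4⟩ := lowerLocus_subset h
    simp only [reflectPair] at h1 h2 h3 h4
    exact ⟨⟨by linarith, by linarith⟩, by linarith, by linarith⟩
  rw [mem_union, mem_preimage]
  by_cases hsq : p ∈ Ioo 0 1 ∧ q ∈ Ioo 0 1
  swap
  · refine iff_of_false (fun h => hsq ⟨h.1, h.2.1⟩) ?_
    rintro (h | h)
    exacts [hsq ⟨Ioo_subset_Ioo_right (by norm_num) (lowerLocus_subset h).1, (lowerLocus_subset h).2⟩,
      hsq ⟨Ioo_subset_Ioo_left (by norm_num) (hupper h).1, (hupper h).2⟩]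
  obtain ⟨⟨hp0, hp1⟩, hq0, hq1⟩ := hsq
  have hp : p ≠ 1 / 2 := fun h => hx (by simp [exceptionalLines, h])
  have hpq : p ≠ q := fun h => hx (by simp [exceptionalLines, h])
  have hlength : (p, q) ∈ lengthLocus 2 ↔ relaxLength [p, q] = 2 := by
    simp [lengthLocus, hp0, hp1, hq0, hq1, hpq]
  rw [hlength]
  rcases lt_or_gt_of_ne hp with hp' | hp'
  · rw [relaxLength_eq_two_iff_mem_lowerLocus hp0 hp' hq0 hq1 hx,
      or_iff_left fun h => lt_asymm hp' (hupper h).1.1]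
  · rw [← relaxLength_map_one_sub, List.map_cons, List.map_cons, List.map_nil,
      relaxLength_eq_two_iff_mem_lowerLocus (by linarith) (by linarith) (by linarith)
        (by linarith) hx', or_iff_right fun h => lt_asymm hp' (lowerLocus_subset h).1.2]
    rfl

end

/-- The locus `L(p,q) = 2` has Lebesgue measure `21/40`. -/
theorem measure_lengthLocus_two : volume (lengthLocus 2) = 21 / 40 := by
  have hnull : volume (exceptionalLines ∪ reflectPair ⁻¹' exceptionalLines) = 0 :=
    measure_union_null volume_exceptionalLines
      (measurePreserving_reflectPair.preimage_null volume_exceptionalLines)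
  have hae : lengthLocus 2 =ᵐ[volume] (lowerLocus ∪ reflectPair ⁻¹' lowerLocus : Set (ℝ × ℝ)) :=
    Filter.eventuallyEq_set.2 ((measure_eq_zero_iff_ae_notMem.1 hnull).mono
      fun x hx => mem_lengthLocus_two_iff hx)
  rw [measure_congr hae, volume_union_reflectPair_preimage_lowerLocus]
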